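/- Let n ≥ 2 and let σ = (1,a,a,...,a) ∈ ℤ^{n+1} with a ≥ 1 an integer. If there exists v ∈ ℤ^{n+1} with ⟨v,v⟩ = 5 and ⟨v,σ⟩ = 0, then a = 2. -/

import Mathlib

/-!
Write `v = (x, w)` with `w ∈ ℤⁿ`, `S = ∑ wᵢ` and `Q = ∑ wᵢ²`. Orthogonality to `σ` gives
`x = -a S`, so `a² S² + Q = 5`. Since `Q ≡ S (mod 2)`, the left side is `≡ (a + 1) S (mod 2)`,
so oddness of `5` forces `a` even and `S` odd. Then `a² ≤ a² S² ≤ 5`, hence `a = 2`.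
-/

theorem Finset.even_sum_mul_self_sub_sum {ι : Type*} (s : Finset ι) (f : ι → ℤ) :
    Even (∑ i ∈ s, f i * f i - ∑ i ∈ s, f i) := by
  rw [← Finset.sum_sub_distrib]
  refine Finset.even_sum _ fun i _ => ?_
  simpa [mul_sub] using Int.even_mul_pred_self (f i)

theorem Fin.sum_mul_ite_zero {R : Type*} [CommSemiring R] {n : ℕ}
    (v : Fin (n + 1) → R) (a : R) :
    ∑ k, v k * (if k = 0 then 1 else a) = v 0 + a * ∑ i : Fin n, v i.succ := by
  simp [Fin.sum_univ_succ, Fin.succ_ne_zero, Finset.mul_sum, mul_comm]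

theorem Int.eq_two_of_mul_self_add_eq_five {a x S Q : ℤ} (ha : 1 ≤ a) (hx : x + a * S = 0)
    (hQ : 0 ≤ Q) (hpar : Even (Q - S)) (h : x * x + Q = 5) : a = 2 := by
  have hodd : ¬Even (a * a * (S * S) + (Q - S) + S) := by
    rw [show a * a * (S * S) + (Q - S) + S = x * x + Q by linear_combination (a * S - x) * hx, h]
    decide
  obtain ⟨haeven, hSodd⟩ : Even a ∧ ¬Even S := by
    simp only [Int.even_add, Int.even_mul, hpar] at hodd
    tauto
  have hS : 0 < S * S := mul_self_pos.2 fun hS0 => hSodd (hS0 ▸ Even.zero)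
  have ha2 : a * a ≤ 5 := by
    have : x * x = a * a * (S * S) := by linear_combination (x - a * S) * hx
    nlinarith
  have : a ≤ 2 := by nlinarith
  interval_cases a
  · exact absurd haeven (by decide)
  · rfl

theorem one_a_dots_a_norm_five_general (n : ℕ) (a : ℤ) (ha : 1 ≤ a)
    (σ : Fin (n + 1) → ℤ)
    (hσ : σ = fun i => if i = 0 then (1 : ℤ) else a)
    (hv : ∃ v : Fin (n + 1) → ℤ,
      (∑ k, v k * v k = 5) ∧ (∑ k, v k * σ k = 0)) :
    a = 2 := by
  obtain ⟨v, hnorm, horth⟩ := hv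
  subst hσ
  rw [Fin.sum_univ_succ] at hnorm
  rw [Fin.sum_mul_ite_zero] at horth
  exact Int.eq_two_of_mul_self_add_eq_five ha horth
    (Finset.sum_nonneg fun i _ => mul_self_nonneg (v i.succ))
    (Finset.univ.even_sum_mul_self_sub_sum _) hnorm

theorem one_a_dots_a_norm_five (n : ℕ) (hn : 2 ≤ n) (a : ℤ) (ha : 1 ≤ a)
    (σ : Fin (n + 1) → ℤ)
    (hσ : σ = fun i => if i = 0 then (1 : ℤ) else a)
    (hv : ∃ v : Fin (n + 1) → ℤ,
      (∑ k, v k * v k = 5) ∧ (∑ k, v k * σ k = 0)) :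
    a = 2 :=
  one_a_dots_a_norm_five_general n a ha σ hσ hv
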